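/- For r ∈ [−1,1] and t ∈ [0,1], define H_{r,t} : (0,∞) → (0,∞) by H_{r,t}(x) = ((1 − t + t x^r)/(t + (1 − t) x^r))^{1/r} when r ≠ 0, and H_{0,t}(x) = x^{2t−1}. Then for each fixed r ∈ [−1,1]: if t ∈ [0, 1/2] the function x ↦ H_{r,t}(x) is monotone decreasing on (0,∞), and if t ∈ [1/2, 1] it is monotone increasing on (0,∞). -/

import Mathlib

/-!
For `r ≠ 0`, `H_{r,t}` is the Möbius map `a ↦ (1 - t + t a) / (t + (1 - t) a)` conjugated by
`x ↦ x ^ r`. Both `x ↦ x ^ r` and `y ↦ y ^ (1 / r)` are increasing when `r > 0` and both are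
decreasing when `r < 0`, so in either case the conjugate inherits the monotonicity of the Möbius
map, whose direction is the sign of its determinant `t² - (1 - t)² = 2t - 1`.
-/

/-- `H_{r,t}(x) = ((1 − t + t x^r)/(t + (1 − t) x^r))^{1/r}` for `r ≠ 0`,
and `H_{0,t}(x) = x^{2t−1}`. -/
noncomputable def Hrt (r t x : ℝ) : ℝ :=
  if r = 0 then x ^ (2 * t - 1)
  else ((1 - t + t * x ^ r) / (t + (1 - t) * x ^ r)) ^ (1 / r)

open Set Real

noncomputable def hrtRatio (t a : ℝ) : ℝ := (1 - t + t * a) / (t + (1 - t) * a)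

section hrtRatio

variable {t : ℝ}

lemma mapsTo_hrtRatio (ht0 : 0 ≤ t) (ht1 : t ≤ 1) : MapsTo (hrtRatio t) (Ioi 0) (Ioi 0) := by
  intro a (ha : 0 < a)
  have hnum : 0 < 1 - t + t * a := by
    rcases ht1.lt_or_eq with ht1 | rfl
    · nlinarith
    · linarith
  have hden : 0 < t + (1 - t) * a := by
    rcases ht0.lt_or_eq with ht0 | rfl
    · nlinarith
    · linarith
  exact div_pos hnum hden

lemma hrtRatio_sub_hrtRatio {a b : ℝ} (ha : t + (1 - t) * a ≠ 0) (hb : t + (1 - t) * b ≠ 0) :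
    hrtRatio t b - hrtRatio t a =
      (2 * t - 1) * (b - a) / ((t + (1 - t) * a) * (t + (1 - t) * b)) := by
  unfold hrtRatio
  field_simp
  ring

lemma monotoneOn_hrtRatio (ht : 1 / 2 ≤ t) (ht1 : t ≤ 1) : MonotoneOn (hrtRatio t) (Ioi 0) := by
  intro a (ha : 0 < a) b (hb : 0 < b) hab
  have hda : 0 < t + (1 - t) * a := by nlinarith
  have hdb : 0 < t + (1 - t) * b := by nlinarith
  rw [← sub_nonneg, hrtRatio_sub_hrtRatio hda.ne' hdb.ne']
  apply div_nonneg <;> nlinarith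

lemma antitoneOn_hrtRatio (ht0 : 0 ≤ t) (ht : t ≤ 1 / 2) : AntitoneOn (hrtRatio t) (Ioi 0) := by
  intro a (ha : 0 < a) b (hb : 0 < b) hab
  have hda : 0 < t + (1 - t) * a := by nlinarith
  have hdb : 0 < t + (1 - t) * b := by nlinarith
  rw [← sub_nonpos, hrtRatio_sub_hrtRatio hda.ne' hdb.ne']
  apply div_nonpos_of_nonpos_of_nonneg <;> nlinarith

end hrtRatio

section rpowConj

variable {f : ℝ → ℝ} {r : ℝ}

lemma mapsTo_rpow_Ioi (r : ℝ) : MapsTo (fun x : ℝ => x ^ r) (Ioi 0) (Ioi 0) :=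
  fun _ hx => rpow_pos_of_pos hx r

lemma MonotoneOn.rpow_conj (hf : MonotoneOn f (Ioi 0)) (hpos : MapsTo f (Ioi 0) (Ioi 0))
    (hr : r ≠ 0) : MonotoneOn (fun x => f (x ^ r) ^ (1 / r)) (Ioi 0) := by
  rcases hr.lt_or_gt with hr | hr
  · exact (antitoneOn_rpow_Ioi_of_exponent_nonpos (one_div_neg.2 hr).le).comp
      (hf.comp_AntitoneOn (antitoneOn_rpow_Ioi_of_exponent_nonpos hr.le) (mapsTo_rpow_Ioi r))
      (hpos.comp (mapsTo_rpow_Ioi r))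
  · exact ((monotoneOn_rpow_Ici_of_exponent_nonneg (by positivity)).mono Ioi_subset_Ici_self).comp
      (hf.comp ((monotoneOn_rpow_Ici_of_exponent_nonneg hr.le).mono Ioi_subset_Ici_self)
        (mapsTo_rpow_Ioi r))
      (hpos.comp (mapsTo_rpow_Ioi r))

lemma AntitoneOn.rpow_conj (hf : AntitoneOn f (Ioi 0)) (hpos : MapsTo f (Ioi 0) (Ioi 0))
    (hr : r ≠ 0) : AntitoneOn (fun x => f (x ^ r) ^ (1 / r)) (Ioi 0) := by
  rcases hr.lt_or_gt with hr | hr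
  · exact (antitoneOn_rpow_Ioi_of_exponent_nonpos (one_div_neg.2 hr).le).comp_MonotoneOn
      (hf.comp (antitoneOn_rpow_Ioi_of_exponent_nonpos hr.le) (mapsTo_rpow_Ioi r))
      (hpos.comp (mapsTo_rpow_Ioi r))
  · exact ((monotoneOn_rpow_Ici_of_exponent_nonneg (by positivity)).mono
      Ioi_subset_Ici_self).comp_AntitoneOn
      (hf.comp_MonotoneOn ((monotoneOn_rpow_Ici_of_exponent_nonneg hr.le).mono Ioi_subset_Ici_self)
        (mapsTo_rpow_Ioi r))
      (hpos.comp (mapsTo_rpow_Ioi r))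

end rpowConj

lemma Hrt_eq_hrtRatio_rpow {r : ℝ} (hr : r ≠ 0) (t : ℝ) :
    (fun x => Hrt r t x) = fun x => hrtRatio t (x ^ r) ^ (1 / r) := by
  simp only [Hrt, hr, if_false, hrtRatio]

theorem Hrt_monotonicity_general (r : ℝ) (t : ℝ) :
    (t ∈ Set.Icc (0 : ℝ) (1/2) → AntitoneOn (fun x => Hrt r t x) (Set.Ioi (0 : ℝ))) ∧
    (t ∈ Set.Icc (1/2 : ℝ) 1 → MonotoneOn (fun x => Hrt r t x) (Set.Ioi (0 : ℝ))) := by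
  by_cases hr : r = 0
  · simp only [Hrt, hr, if_true]
    refine ⟨fun ⟨_, ht⟩ => antitoneOn_rpow_Ioi_of_exponent_nonpos (by linarith),
      fun ⟨ht, _⟩ => (monotoneOn_rpow_Ici_of_exponent_nonneg (by linarith)).mono
        Ioi_subset_Ici_self⟩
  · rw [Hrt_eq_hrtRatio_rpow hr]
    exact ⟨fun ⟨ht0, ht⟩ => (antitoneOn_hrtRatio ht0 ht).rpow_conj
        (mapsTo_hrtRatio ht0 (by linarith)) hr,
      fun ⟨ht, ht1⟩ => (monotoneOn_hrtRatio ht ht1).rpow_conj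
        (mapsTo_hrtRatio (by linarith) ht1) hr⟩

/-- For fixed `r ∈ [−1,1]`, the map `x ↦ H_{r,t}(x)` is decreasing on `(0,∞)` for
`t ∈ [0,1/2]` and increasing on `(0,∞)` for `t ∈ [1/2,1]`. -/
theorem Hrt_monotonicity (r : ℝ) (hr : r ∈ Set.Icc (-1 : ℝ) 1) (t : ℝ) :
    (t ∈ Set.Icc (0 : ℝ) (1/2) → AntitoneOn (fun x => Hrt r t x) (Set.Ioi (0 : ℝ))) ∧
    (t ∈ Set.Icc (1/2 : ℝ) 1 → MonotoneOn (fun x => Hrt r t x) (Set.Ioi (0 : ℝ))) :=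
  Hrt_monotonicity_general r t
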